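/- A subsemimodule W ⊆ (ℝmax^n)^2 is a closed congruence if, and only if, W = (W⊤)⊥. -/

import Mathlib

open scoped Classical

noncomputable section

/-- The max-plus semiring `ℝmax = ℝ ∪ {-∞}`. Its `Add` is the max-plus
"multiplication" `a ⊗ b = a + b` (with `-∞` absorbing), its `max` is the
max-plus "addition". -/
abbrev Rmax := WithBot ℝ

/-- The order topology on `WithBot ℝ` (the topology of the metric
`d(a,b) = |exp a - exp b|`). -/
instance : TopologicalSpace Rmax := Preorder.topology Rmax
instance : OrderTopology Rmax := ⟨rfl⟩

/-- Vectors of the max-plus semimodule `ℝmax^n`. -/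
abbrev RmaxVec (n : ℕ) := Fin n → Rmax

/-- The max-plus linear combination `xλ ⊕ yμ`. -/
def maxComb {n : ℕ} (x y : RmaxVec n) (lam mu : Rmax) : RmaxVec n :=
  fun i => max (x i + lam) (y i + mu)

/-- `V ⊆ ℝmax^n` is a (max-plus) subsemimodule. -/
def IsSubsemimodule {n : ℕ} (V : Set (RmaxVec n)) : Prop :=
  ∀ x ∈ V, ∀ y ∈ V, ∀ lam mu : Rmax, maxComb x y lam mu ∈ V

/-- `W ⊆ (ℝmax^n)² ≅ ℝmax^{2n}` is a (max-plus) subsemimodule,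
with the entrywise operations. -/
def IsSubsemimodulePair {n : ℕ} (W : Set (RmaxVec n × RmaxVec n)) : Prop :=
  ∀ p ∈ W, ∀ q ∈ W, ∀ lam mu : Rmax,
    (maxComb p.1 q.1 lam mu, maxComb p.2 q.2 lam mu) ∈ W

/-- A pre-congruence: a subsemimodule of `(ℝmax^n)²` containing the diagonal
and transitive. -/
def IsPrecongruence {n : ℕ} (W : Set (RmaxVec n × RmaxVec n)) : Prop :=
  IsSubsemimodulePair W ∧ (∀ f : RmaxVec n, (f, f) ∈ W) ∧
    ∀ f g h : RmaxVec n, (f, g) ∈ W → (g, h) ∈ W → (f, h) ∈ W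

/-- A polar cone: a pre-congruence such that `f ≤ g` implies `(f,g) ∈ W`. -/
def IsPolarCone {n : ℕ} (W : Set (RmaxVec n × RmaxVec n)) : Prop :=
  IsPrecongruence W ∧ ∀ f g : RmaxVec n, f ≤ g → (f, g) ∈ W

/-- A congruence: a symmetric pre-congruence. -/
def IsCongruence {n : ℕ} (W : Set (RmaxVec n × RmaxVec n)) : Prop :=
  IsPrecongruence W ∧ ∀ f g : RmaxVec n, (f, g) ∈ W → (g, f) ∈ W

/-- The max-plus bracket `⟨y, x⟩ = max_i (y_i + x_i)`. -/
def mpBracket {n : ℕ} (y x : RmaxVec n) : Rmax :=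
  Finset.univ.sup fun i => y i + x i

/-- The polar `V°` of `V ⊆ ℝmax^n`. -/
def mpPolar {n : ℕ} (V : Set (RmaxVec n)) : Set (RmaxVec n × RmaxVec n) :=
  { p | ∀ x ∈ V, mpBracket p.1 x ≤ mpBracket p.2 x }

/-- The orthogonal `V⊥` of `V ⊆ ℝmax^n`. -/
def mpOrtho {n : ℕ} (V : Set (RmaxVec n)) : Set (RmaxVec n × RmaxVec n) :=
  { p | ∀ x ∈ V, mpBracket p.1 x = mpBracket p.2 x }

/-- The dual polar `W⋄` of `W ⊆ (ℝmax^n)²`. -/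
def mpDiamond {n : ℕ} (W : Set (RmaxVec n × RmaxVec n)) : Set (RmaxVec n) :=
  { x | ∀ p ∈ W, mpBracket p.1 x ≤ mpBracket p.2 x }

/-- The dual orthogonal `W⊤` of `W ⊆ (ℝmax^n)²`. -/
def mpTop {n : ℕ} (W : Set (RmaxVec n × RmaxVec n)) : Set (RmaxVec n) :=
  { x | ∀ p ∈ W, mpBracket p.1 x = mpBracket p.2 x }

/-!
Let `W` be a closed congruence and `(F, G) ∉ W` with `G ≤ F` and `G` finite. The vectors `a`
with `(a ⊕ G, G) ∈ W` form a closed lower set that is stable under `⊕`, and such a set is a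
max-plus half-space `{a | ⟨a, x⟩ ≤ 0}`. Since the set is also stable under replacing `b` by any
`a` with `(a, b) ∈ W`, and under common real shifts, the vector `x` is orthogonal to `W`; it
separates `F` from `G`. An arbitrary pair `(f, g) ∉ W` is first made finite by taking `⊕` with
a very negative constant (this stays outside `W` since `W` is closed), and then one of
`(f ⊕ g, f)`, `(f ⊕ g, g)` lies outside `W` by transitivity.
-/

open Filter Topology

namespace Rmax

lemma coe_add_le_zero_iff (α : ℝ) (c : Rmax) : (α : Rmax) + c ≤ 0 ↔ c ≤ ((-α : ℝ) : Rmax) := by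
  induction c using WithBot.recBotCoe with
  | bot => simp
  | coe γ =>
    rw [← WithBot.coe_add, ← WithBot.coe_zero, WithBot.coe_le_coe, WithBot.coe_le_coe]
    constructor <;> intro h <;> linarith

lemma le_of_forall_add_le_zero {a b : Rmax} (h : ∀ c : ℝ, b + c ≤ 0 → a + c ≤ 0) : a ≤ b := by
  induction b using WithBot.recBotCoe with
  | bot =>
    induction a using WithBot.recBotCoe with
    | bot => exact le_rfl
    | coe α =>
      have := (coe_add_le_zero_iff α _).1 (h (1 - α) (by simp))
      norm_cast at this
      linarith
  | coe β =>
    have := h (-β) ((coe_add_le_zero_iff β _).2 le_rfl)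
    rwa [add_comm, coe_add_le_zero_iff, neg_neg] at this

lemma continuous_add_const (c : Rmax) : Continuous fun a : Rmax => a + c := by
  induction c using WithBot.recBotCoe with
  | bot => simpa using continuous_const
  | coe γ =>
    convert ((OrderIso.addRight γ).withBotCongr).continuous using 1
    funext a
    induction a using WithBot.recBotCoe <;> simp [← WithBot.coe_add]

lemma continuous_const_add_coe (a : Rmax) : Continuous fun c : ℝ => a + (c : Rmax) := by
  induction a using WithBot.recBotCoe with
  | bot => simpa using continuous_const
  | coe α =>
    simp_rw [← WithBot.coe_add]
    exact WithBot.continuous_coe.comp (continuous_const_add α)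

lemma tendsto_coe_atBot : Tendsto ((↑) : ℝ → Rmax) atBot (𝓝 ⊥) :=
  (WithBot.tendsto_nhds_bot_iff _).2 fun i =>
    (eventually_lt_atBot i).mono fun _ h => WithBot.coe_lt_coe.2 h

/-- `c` plays the role of `-sup A`, which is `⊥` when `A` is unbounded. -/
lemma exists_coe_add_le_zero_iff (A : Set Rmax) (hA : ∃ γ : ℝ, (γ : Rmax) ∈ A) :
    ∃ c : Rmax, ∀ η : ℝ, (η : Rmax) + c ≤ 0 ↔ ∀ r < η, ∃ α ∈ A, (r : Rmax) ≤ α := by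
  set T : Set ℝ := {r | ∃ α ∈ A, (r : Rmax) ≤ α}
  have hT_lower : ∀ r s, r ≤ s → s ∈ T → r ∈ T := fun r s hrs ⟨α, hα, hs⟩ =>
    ⟨α, hα, (WithBot.coe_le_coe.2 hrs).trans hs⟩
  by_cases hbdd : BddAbove T
  · refine ⟨((-sSup T : ℝ) : Rmax), fun η => ?_⟩
    rw [coe_add_le_zero_iff, WithBot.coe_le_coe, neg_le_neg_iff]
    constructor
    · intro hη r hr
      obtain ⟨γ, hγ⟩ := hA
      obtain ⟨s, hs, hrs⟩ :=
        exists_lt_of_lt_csSup (show T.Nonempty from ⟨γ, _, hγ, le_rfl⟩) (hr.trans_le hη)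
      exact hT_lower r s hrs.le hs
    · exact fun h => le_of_forall_lt_imp_le_of_dense fun r hr => le_csSup hbdd (h r hr)
  · refine ⟨⊥, fun η => ⟨fun _ r _ => ?_, fun _ => by simp⟩⟩
    obtain ⟨s, hs, hrs⟩ := not_bddAbove_iff.1 hbdd r
    exact hT_lower r s hrs.le hs

end Rmax

section Bracket

variable {n : ℕ}

lemma mpBracket_le_iff {a x : RmaxVec n} {t : Rmax} :
    mpBracket a x ≤ t ↔ ∀ i, a i + x i ≤ t := by
  simp [mpBracket, Finset.sup_le_iff]

lemma mpBracket_maxComb (a b x : RmaxVec n) (l m : Rmax) :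
    mpBracket (maxComb a b l m) x = max (mpBracket a x + l) (mpBracket b x + m) := by
  have sup_add : ∀ (f : Fin n → Rmax) (c : Rmax),
      Finset.univ.sup f + c = Finset.univ.sup fun i => f i + c := fun f c =>
    Finset.apply_sup_eq_sup_comp (· + c) (fun _ _ => (max_add_add_right _ _ _).symm)
      (WithBot.bot_add c)
  unfold mpBracket
  rw [sup_add, sup_add, ← Finset.sup_sup]
  congr 1
  funext i
  simp only [maxComb, Pi.sup_apply, ← max_add_add_right, add_right_comm _ (x i)]

lemma maxComb_zero_zero (a b : RmaxVec n) : maxComb a b 0 0 = a ⊔ b := by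
  funext i
  simp [maxComb]

lemma maxComb_self (a : RmaxVec n) (c : Rmax) : maxComb a a c c = fun i => a i + c := by
  funext i
  simp [maxComb]

lemma mpBracket_sup (a b x : RmaxVec n) :
    mpBracket (a ⊔ b) x = mpBracket a x ⊔ mpBracket b x := by
  simpa [maxComb_zero_zero] using mpBracket_maxComb a b x 0 0

lemma mpBracket_add_const (a x : RmaxVec n) (c : Rmax) :
    mpBracket (fun i => a i + c) x = mpBracket a x + c := by
  simpa [maxComb_self] using mpBracket_maxComb a a x c c

lemma continuous_mpBracket_left (x : RmaxVec n) : Continuous fun a : RmaxVec n => mpBracket a x :=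
  Continuous.finset_sup_apply fun i _ => (Rmax.continuous_add_const (x i)).comp (continuous_apply i)

end Bracket

section Orthogonal

variable {n : ℕ}

lemma isClosed_mpOrtho (V : Set (RmaxVec n)) : IsClosed (mpOrtho V) := by
  simp only [mpOrtho, Set.ofPred_forall]
  exact isClosed_iInter fun x => isClosed_iInter fun _ =>
    isClosed_eq ((continuous_mpBracket_left x).comp continuous_fst)
      ((continuous_mpBracket_left x).comp continuous_snd)

lemma isCongruence_mpOrtho (V : Set (RmaxVec n)) : IsCongruence (mpOrtho V) := by
  refine ⟨⟨fun p hp q hq l m x hx => ?_, fun f x _ => rfl,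
    fun f g h hfg hgh x hx => (hfg x hx).trans (hgh x hx)⟩, fun f g hfg x hx => (hfg x hx).symm⟩
  simp only [mpBracket_maxComb, hp x hx, hq x hx]

end Orthogonal

lemma IsLowerSet.mem_of_forall_exists_le {ι α : Type*} [Fintype ι] [SemilatticeSup α] [OrderBot α]
    {D : Set (ι → α)} (hlow : IsLowerSet D) (hsup : SupClosed D) (hne : D.Nonempty) {v : ι → α}
    (h : ∀ i, ∃ a ∈ D, v i ≤ a i) : v ∈ D := by
  rcases isEmpty_or_nonempty ι with hι | hι
  · obtain ⟨a, ha⟩ := hne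
    rwa [Subsingleton.elim v a]
  choose a haD hva using h
  refine hlow (fun i => ?_) (hsup.finsetSup_mem Finset.univ_nonempty fun i _ => haD i)
  rw [Finset.sup_apply]
  exact (hva i).trans (Finset.le_sup (f := fun j => a j i) (Finset.mem_univ i))

lemma IsClosed.mem_of_forall_pos_add_neg_mem {n : ℕ} {D : Set (RmaxVec n)} (hD : IsClosed D)
    {v : RmaxVec n} (h : ∀ ε : ℝ, 0 < ε → (fun i => v i + ((-ε : ℝ) : Rmax)) ∈ D) : v ∈ D := by
  have hlim : Tendsto (fun ε : ℝ => fun i => v i + ((-ε : ℝ) : Rmax)) (𝓝[>] 0) (𝓝 v) := by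
    refine tendsto_pi_nhds.2 fun i => tendsto_nhdsWithin_of_tendsto_nhds ?_
    exact ((Rmax.continuous_const_add_coe (v i)).comp continuous_neg).tendsto' 0 (v i) (by simp)
  exact hD.mem_of_tendsto hlim (eventually_nhdsWithin_of_forall h)

theorem exists_mem_iff_mpBracket_le_zero {n : ℕ} {D : Set (RmaxVec n)} (hD : IsClosed D)
    (hlow : IsLowerSet D) (hsup : SupClosed D) {G : RmaxVec n} (hG : G ∈ D)
    (hGfin : ∀ i, G i ≠ ⊥) : ∃ x : RmaxVec n, ∀ a, a ∈ D ↔ mpBracket a x ≤ 0 := by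
  have hA : ∀ j, ∃ γ : ℝ, (γ : Rmax) ∈ (fun a => a j) '' D := fun j =>
    (WithBot.ne_bot_iff_exists.1 (hGfin j)).imp fun γ hγ => ⟨G, hG, hγ.symm⟩
  choose x hx using fun j => Rmax.exists_coe_add_le_zero_iff _ (hA j)
  refine ⟨x, fun a => ⟨fun ha => mpBracket_le_iff.2 fun j => ?_, fun ha => ?_⟩⟩
  · induction hj : a j using WithBot.recBotCoe with
    | bot => simp
    | coe α => exact (hx j α).2 fun r hr => ⟨a j, ⟨a, ha, rfl⟩, hj ▸ WithBot.coe_le_coe.2 hr.le⟩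
  refine hD.mem_of_forall_pos_add_neg_mem fun ε hε =>
    hlow.mem_of_forall_exists_le hsup ⟨G, hG⟩ fun j => ?_
  induction hj : a j using WithBot.recBotCoe with
  | bot => exact ⟨G, hG, by simp⟩
  | coe η =>
    have hη := mpBracket_le_iff.1 ha j
    rw [hj] at hη
    obtain ⟨_, ⟨b, hb, rfl⟩, hle⟩ := (hx j η).1 hη (η - ε) (by linarith)
    exact ⟨b, hb, by rwa [← WithBot.coe_add, ← sub_eq_add_neg]⟩

section Congruence

variable {n : ℕ} {W : Set (RmaxVec n × RmaxVec n)}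

lemma IsSubsemimodulePair.sup_mem (hW : IsSubsemimodulePair W) {a b c d : RmaxVec n}
    (hab : (a, b) ∈ W) (hcd : (c, d) ∈ W) : (a ⊔ c, b ⊔ d) ∈ W := by
  simpa [maxComb_zero_zero] using hW _ hab _ hcd 0 0

lemma IsSubsemimodulePair.add_const_mem (hW : IsSubsemimodulePair W) {a b : RmaxVec n}
    (hab : (a, b) ∈ W) (c : Rmax) : ((fun i => a i + c), fun i => b i + c) ∈ W := by
  simpa [maxComb_self] using hW _ hab _ hab c c

def absorbedBy (W : Set (RmaxVec n × RmaxVec n)) (G : RmaxVec n) : Set (RmaxVec n) :=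
  {a | (a ⊔ G, G) ∈ W}

lemma IsPrecongruence.self_mem_absorbedBy (hW : IsPrecongruence W) (G : RmaxVec n) :
    G ∈ absorbedBy W G := by
  simpa [absorbedBy] using hW.2.1 G

lemma IsPrecongruence.mem_absorbedBy_of_mem (hW : IsPrecongruence W) {G a b : RmaxVec n}
    (hab : (a, b) ∈ W) (hb : b ∈ absorbedBy W G) : a ∈ absorbedBy W G :=
  hW.2.2 _ _ _ (hW.1.sup_mem hab (hW.2.1 G)) hb

lemma IsSubsemimodulePair.supClosed_absorbedBy (hW : IsSubsemimodulePair W) (G : RmaxVec n) :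
    SupClosed (absorbedBy W G) := fun a ha b hb => by
  simpa [absorbedBy, sup_sup_distrib_right] using hW.sup_mem ha hb

lemma IsCongruence.isLowerSet_absorbedBy (hW : IsCongruence W) (G : RmaxVec n) :
    IsLowerSet (absorbedBy W G) := fun b a hab hb => by
  obtain ⟨⟨hsub, hrefl, htrans⟩, hsymm⟩ := hW
  have h := hsub.sup_mem hb (hrefl (a ⊔ G))
  rw [sup_eq_left.2 (sup_le_sup_right hab G), sup_eq_right.2 le_sup_right] at h
  exact htrans _ _ _ (hsymm _ _ h) hb

lemma isClosed_absorbedBy (hW : IsClosed W) (G : RmaxVec n) : IsClosed (absorbedBy W G) :=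
  hW.preimage ((continuous_pi fun i => (continuous_apply i).max continuous_const).prodMk
    continuous_const)

theorem IsCongruence.exists_mem_mpTop_lt (hW : IsCongruence W) (hcl : IsClosed W)
    {F G : RmaxVec n} (hGfin : ∀ i, G i ≠ ⊥) (hGF : G ≤ F) (hFG : (F, G) ∉ W) :
    ∃ x ∈ mpTop W, mpBracket G x < mpBracket F x := by
  have ⟨hpre, hsymm⟩ := hW
  obtain ⟨x, hx⟩ := exists_mem_iff_mpBracket_le_zero (isClosed_absorbedBy hcl G)
    (hW.isLowerSet_absorbedBy G) (hpre.1.supClosed_absorbedBy G) (hpre.self_mem_absorbedBy G)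
    hGfin
  have hmono : ∀ a b, (a, b) ∈ W → mpBracket a x ≤ mpBracket b x := fun a b hab =>
    Rmax.le_of_forall_add_le_zero fun c hc => by
      rw [← mpBracket_add_const, ← hx] at hc ⊢
      exact hpre.mem_absorbedBy_of_mem (hpre.1.add_const_mem hab c) hc
  refine ⟨x, fun p hp => (hmono _ _ hp).antisymm (hmono _ _ (hsymm _ _ hp)), ?_⟩
  have hF : F ∉ absorbedBy W G := by simpa [absorbedBy, sup_eq_left.2 hGF] using hFG
  rw [hx] at hF
  exact ((hx G).1 (hpre.self_mem_absorbedBy G)).trans_lt (not_le.1 hF)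

theorem IsCongruence.exists_mem_mpTop_ne_of_ne_bot (hW : IsCongruence W) (hcl : IsClosed W)
    {f g : RmaxVec n} (hf : ∀ i, f i ≠ ⊥) (hg : ∀ i, g i ≠ ⊥) (hfg : (f, g) ∉ W) :
    ∃ x ∈ mpTop W, mpBracket f x ≠ mpBracket g x := by
  have ⟨⟨_, _, htrans⟩, hsymm⟩ := hW
  by_cases h : (f ⊔ g, g) ∈ W
  · have h' : (f ⊔ g, f) ∉ W := fun h' => hfg (htrans _ _ _ (hsymm _ _ h') h)
    obtain ⟨x, hx, hlt⟩ := hW.exists_mem_mpTop_lt hcl hf le_sup_left h'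
    rw [mpBracket_sup, left_lt_sup] at hlt
    exact ⟨x, hx, fun he => hlt he.ge⟩
  · obtain ⟨x, hx, hlt⟩ := hW.exists_mem_mpTop_lt hcl hg le_sup_right h
    rw [mpBracket_sup, right_lt_sup] at hlt
    exact ⟨x, hx, fun he => hlt he.le⟩

theorem IsCongruence.exists_mem_mpTop_ne (hW : IsCongruence W) (hcl : IsClosed W)
    {f g : RmaxVec n} (hfg : (f, g) ∉ W) : ∃ x ∈ mpTop W, mpBracket f x ≠ mpBracket g x := by
  let trunc : ℝ → RmaxVec n → RmaxVec n := fun t a => a ⊔ fun _ => (t : Rmax)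
  have htrunc : ∀ a : RmaxVec n, Tendsto (fun t => trunc t a) atBot (𝓝 a) := fun a =>
    tendsto_pi_nhds.2 fun i => by
      simpa [trunc] using (tendsto_const_nhds (x := a i)).max Rmax.tendsto_coe_atBot
  obtain ⟨t, ht⟩ := (((htrunc f).prodMk_nhds (htrunc g)).eventually
    (hcl.isOpen_compl.mem_nhds hfg)).exists
  have hfin : ∀ a i, trunc t a i ≠ ⊥ := fun a i =>
    ne_bot_of_le_ne_bot WithBot.coe_ne_bot le_sup_right
  obtain ⟨x, hx, hne⟩ := hW.exists_mem_mpTop_ne_of_ne_bot hcl (hfin f) (hfin g) ht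
  exact ⟨x, hx, fun he => hne (by simp only [trunc, mpBracket_sup, he])⟩

end Congruence

theorem closed_congruence_iff_biorthogonal_general (n : ℕ)
    (W : Set (RmaxVec n × RmaxVec n)) :
    (IsClosed W ∧ IsCongruence W) ↔ W = mpOrtho (mpTop W) := by
  constructor
  · rintro ⟨hcl, hW⟩
    refine Set.Subset.antisymm (fun p hp x hx => hx p hp) fun p hp => ?_
    by_contra hpW
    obtain ⟨x, hx, hne⟩ := hW.exists_mem_mpTop_ne hcl hpW
    exact hne (hp x hx)
  · intro h
    rw [h]
    exact ⟨isClosed_mpOrtho _, isCongruence_mpOrtho _⟩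

/-- Theorem 4.6 of the paper, congruence part: a subsemimodule
`W ⊆ (ℝmax^n)²` is a closed congruence if, and only if, `W = (W⊤)⊥`. -/
theorem closed_congruence_iff_biorthogonal (n : ℕ)
    (W : Set (RmaxVec n × RmaxVec n)) (hW : IsSubsemimodulePair W) :
    (IsClosed W ∧ IsCongruence W) ↔ W = mpOrtho (mpTop W) :=
  closed_congruence_iff_biorthogonal_general n W
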